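/- arXiv:2411.18782 — 3 statements merged into one kernel-verified Lean document; each statement's English description precedes it below -/
import Mathlib

section
/- Let (G, e) be a marked connected graph with τ(G − e) > 0 and τ(G/e) > 0, and let (G', e') be obtained by replacing e with a path of length k+1 and marking one new edge e'. Then (τ(G'−e'), τ(G'/e')) = (τ(G−e), τ(G/e)) · [[1,k],[0,1]], i.e. τ(G'−e') = τ(G−e) and τ(G'/e') = k·τ(G−e) + τ(G/e). -/
/-- A finite multigraph without loops: edges are oriented pairs of distinct vertices;
parallel edges are allowed since `E` is an arbitrary type. -/
structure Multigraph (V E : Type) where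
  fst : E → V
  snd : E → V
  no_loop : ∀ e, fst e ≠ snd e

namespace Multigraph

variable {V E : Type}

/-- The simple graph on `V` whose edges are the (unordered) endpoint pairs of the
edges in the set `T`. -/
def simpleOf (M : Multigraph V E) (T : Set E) : SimpleGraph V :=
  SimpleGraph.fromEdgeSet {s | ∃ e ∈ T, s = s(M.fst e, M.snd e)}

/-- `T` is a spanning tree of the multigraph `M`: it connects all the vertices and
has exactly `|V| - 1` edges. -/
def IsSpanningTree (M : Multigraph V E) (T : Set E) : Prop :=
  (M.simpleOf T).Connected ∧ T.ncard = Nat.card V - 1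

/-- The number of spanning trees of the multigraph `M`. -/
noncomputable def tau (M : Multigraph V E) : ℕ :=
  Nat.card {T : Set E // M.IsSpanningTree T}

/-- Deletion of the edge `e`. -/
def delete (M : Multigraph V E) (e : E) : Multigraph V {e' : E // e' ≠ e} where
  fst e' := M.fst e'.1
  snd e' := M.snd e'.1
  no_loop e' := M.no_loop e'.1

open Classical in
/-- The map sending `snd e` to `fst e` and fixing all other vertices. -/
noncomputable def contractMap (M : Multigraph V E) (e : E) (v : V) :
    {w : V // w ≠ M.snd e} :=
  if h : v = M.snd e then ⟨M.fst e, M.no_loop e⟩ else ⟨v, h⟩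

/-- Contraction of the edge `e`: the endpoints of `e` are identified, and the
resulting loops (including `e` itself) are removed. -/
noncomputable def contract (M : Multigraph V E) (e : E) :
    Multigraph {w : V // w ≠ M.snd e}
      {e' : E // e' ≠ e ∧ M.contractMap e (M.fst e') ≠ M.contractMap e (M.snd e')} where
  fst e' := M.contractMap e (M.fst e'.1)
  snd e' := M.contractMap e (M.snd e'.1)
  no_loop e' := e'.2.2

/-- The multigraph is simple: distinct edges have distinct endpoint pairs. -/
def Simple (M : Multigraph V E) : Prop :=
  ∀ e₁ e₂ : E, s(M.fst e₁, M.snd e₁) = s(M.fst e₂, M.snd e₂) → e₁ = e₂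

end Multigraph

namespace Multigraph

variable {V E : Type}

/-- The subdivision operation `f^k`: replace the edge `e` by a path with `k+1` edges
through `k` new internal vertices. The new path edges are indexed by `Fin (k+1)`. -/
def subdivide (M : Multigraph V E) (e : E) (k : ℕ) :
    Multigraph (V ⊕ Fin k) ({e' : E // e' ≠ e} ⊕ Fin (k + 1)) where
  fst x :=
    match x with
    | .inl e' => .inl (M.fst e'.1)
    | .inr i =>
        if h : (i : ℕ) = 0 then .inl (M.fst e)
        else .inr ⟨(i : ℕ) - 1, by have := i.isLt; omega⟩
  snd x :=
    match x with
    | .inl e' => .inl (M.snd e'.1)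
    | .inr i =>
        if h : (i : ℕ) = k then .inl (M.snd e)
        else .inr ⟨(i : ℕ), by have := i.isLt; omega⟩
  no_loop := by
    rintro (e' | i)
    · simpa using M.no_loop e'.1
    · dsimp only
      split_ifs with h1 h2 <;> simp_all [M.no_loop e]
      omega

/-- The parallel-edge operation `g^k`: replace the edge `e` by `k+1` parallel copies,
indexed by `Fin (k+1)`. -/
def addParallel (M : Multigraph V E) (e : E) (k : ℕ) :
    Multigraph V ({e' : E // e' ≠ e} ⊕ Fin (k + 1)) where
  fst x := match x with | .inl e' => M.fst e'.1 | .inr _ => M.fst e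
  snd x := match x with | .inl e' => M.snd e'.1 | .inr _ => M.snd e
  no_loop := by rintro (e' | i); exacts [M.no_loop e'.1, M.no_loop e]

end Multigraph

/-!
Every spanning tree of `M.subdivide e k` is the lift of a spanning tree `T` of `M`: the old edges
of `T` together with the whole path if `e ∈ T`, and with the path minus one of its `k + 1` edges
if `e ∉ T`; two missing path edges would cut off the new vertices between them.
The spanning trees of `M − f` and of `M / f` are those of `M` avoiding, resp. containing, `f`.
Hence the trees of the subdivision avoiding the path edge `e'` are the lifts of trees of `M − e`
missing exactly `e'`, and those containing `e'` are the lifts of trees of `M / e` and the lifts of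
trees of `M − e` missing one of the `k` other path edges.
-/

theorem Nat.card_subtype_ne {α : Type} [Finite α] (a : α) :
    Nat.card {x : α // x ≠ a} = Nat.card α - 1 := by
  have h : Nat.card ({a}ᶜ : Set α) = Nat.card α - 1 := by
    rw [Nat.card_coe_set_eq, Set.ncard_compl, Set.ncard_singleton]
  exact h

namespace Multigraph

variable {V E : Type}

theorem one_lt_card [Finite V] (M : Multigraph V E) (f : E) : 1 < Nat.card V :=
  Finite.one_lt_card_iff_nontrivial.2 ⟨_, _, M.no_loop f⟩

variable (M : Multigraph V E)

section Connectivity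

variable {S S' : Set E}

theorem simpleOf_adj {x y : V} :
    (M.simpleOf S).Adj x y ↔ ∃ f ∈ S, s(M.fst f, M.snd f) = s(x, y) := by
  simp only [simpleOf, SimpleGraph.fromEdgeSet_adj, Set.mem_ofPred_eq]
  constructor
  · rintro ⟨⟨f, hf, hxy⟩, -⟩
    exact ⟨f, hf, hxy.symm⟩
  · rintro ⟨f, hf, hxy⟩
    refine ⟨⟨f, hf, hxy.symm⟩, fun h => M.no_loop f ?_⟩
    subst h
    obtain ⟨h1, h2⟩ | ⟨h1, h2⟩ := Sym2.eq_iff.1 hxy <;> exact h1.trans h2.symm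

theorem reachable_fst_snd {f : E} (hf : f ∈ S) :
    (M.simpleOf S).Reachable (M.fst f) (M.snd f) :=
  ((M.simpleOf_adj).2 ⟨f, hf, rfl⟩).reachable

theorem simpleOf_mono (h : S ⊆ S') : M.simpleOf S ≤ M.simpleOf S' := fun _ _ hxy => by
  obtain ⟨f, hf, hxy⟩ := (M.simpleOf_adj).1 hxy
  exact (M.simpleOf_adj).2 ⟨f, h hf, hxy⟩

theorem reachable_map {W : Type} {H : SimpleGraph W} (c : V → W)
    (hc : ∀ f ∈ S, H.Reachable (c (M.fst f)) (c (M.snd f))) {x y : V}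
    (h : (M.simpleOf S).Reachable x y) : H.Reachable (c x) (c y) := by
  rw [SimpleGraph.reachable_iff_reflTransGen] at h ⊢
  refine h.lift' c fun a b hab => ?_
  obtain ⟨f, hf, hab⟩ := (M.simpleOf_adj).1 hab
  refine (SimpleGraph.reachable_iff_reflTransGen _ _).1 ?_
  rcases Sym2.eq_iff.1 hab with ⟨rfl, rfl⟩ | ⟨rfl, rfl⟩
  exacts [hc f hf, (hc f hf).symm]

theorem card_le_ncard_add_one_of_connected [Finite E] (h : (M.simpleOf S).Connected) :
    Nat.card V ≤ S.ncard + 1 := by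
  refine h.card_vert_le_card_edgeSet_add_one.trans (Nat.add_le_add_right ?_ 1)
  have hsub : (M.simpleOf S).edgeSet ⊆ (fun f => s(M.fst f, M.snd f)) '' S := by
    intro s hs
    rw [simpleOf, SimpleGraph.edgeSet_fromEdgeSet] at hs
    obtain ⟨⟨f, hf, rfl⟩, -⟩ := hs
    exact ⟨f, hf, rfl⟩
  rw [Nat.card_coe_set_eq]
  exact (Set.ncard_le_ncard hsub (Set.toFinite _)).trans (Set.ncard_image_le (Set.toFinite _))

variable {M} in
theorem IsSpanningTree.injOn [Finite E] (hS : M.IsSpanningTree S) :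
    S.InjOn fun f => s(M.fst f, M.snd f) := by
  intro f hf g hg hfg
  by_contra hne
  have hsame : M.simpleOf (S \ {g}) = M.simpleOf S := by
    refine le_antisymm (M.simpleOf_mono Set.sdiff_subset) fun x y hxy => ?_
    obtain ⟨f', hf', hxy⟩ := (M.simpleOf_adj).1 hxy
    refine (M.simpleOf_adj).2 ?_
    by_cases h : f' = g
    · subst h
      exact ⟨f, ⟨hf, hne⟩, hfg.trans hxy⟩
    · exact ⟨f', ⟨hf', h⟩, hxy⟩
  have hle := M.card_le_ncard_add_one_of_connected (hsame ▸ hS.1)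
  have hlt := Set.ncard_sdiff_singleton_lt_of_mem hg
  have := hS.2
  omega

end Connectivity

section DeleteContract

variable {f : E}

theorem simpleOf_delete (S : Set {g : E // g ≠ f}) :
    (M.delete f).simpleOf S = M.simpleOf (Subtype.val '' S) := by
  ext x y
  simp [simpleOf_adj, delete]

theorem isSpanningTree_delete_iff (S : Set {g : E // g ≠ f}) :
    (M.delete f).IsSpanningTree S ↔ M.IsSpanningTree (Subtype.val '' S) := by
  rw [IsSpanningTree, IsSpanningTree, simpleOf_delete,
    Set.ncard_image_of_injective _ Subtype.val_injective]

theorem tau_delete (f : E) :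
    (M.delete f).tau = Nat.card {T : Set E // M.IsSpanningTree T ∧ f ∉ T} := by
  refine Nat.card_eq_of_bijective
    (fun S => ⟨Subtype.val '' S.1, (M.isSpanningTree_delete_iff S.1).1 S.2, by simp⟩) ⟨?_, ?_⟩
  · intro S S' h
    exact Subtype.ext (Set.image_injective.2 Subtype.val_injective (congrArg Subtype.val h))
  · rintro ⟨T, hT, hfT⟩
    have hT' : Subtype.val '' (Subtype.val ⁻¹' T : Set {g : E // g ≠ f}) = T := by
      rw [Set.image_preimage_eq_inter_range, Subtype.range_coe_subtype, Set.inter_eq_left]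
      exact fun g hg (hgf : g = f) => hfT (hgf ▸ hg)
    exact ⟨⟨_, (M.isSpanningTree_delete_iff _).2 (hT'.symm ▸ hT)⟩, Subtype.ext hT'⟩

theorem contractMap_val (w : {w : V // w ≠ M.snd f}) : M.contractMap f w = w := dif_neg w.2

theorem contractMap_snd : M.contractMap f (M.snd f) = ⟨M.fst f, M.no_loop f⟩ := dif_pos rfl

theorem contractMap_fst : M.contractMap f (M.fst f) = ⟨M.fst f, M.no_loop f⟩ :=
  dif_neg (M.no_loop f)

theorem sym2_eq_of_contractMap_eq {u v : V} (huv : u ≠ v)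
    (h : M.contractMap f u = M.contractMap f v) : s(u, v) = s(M.fst f, M.snd f) := by
  unfold contractMap at h
  split_ifs at h with hu hv hv
  · exact absurd (hu.trans hv.symm) huv
  · obtain rfl : M.fst f = v := congrArg Subtype.val h
    rw [hu, Sym2.eq_swap]
  · obtain rfl : u = M.fst f := congrArg Subtype.val h
    rw [hv]
  · exact absurd (congrArg Subtype.val h) huv

theorem reachable_contractMap {S : Set E} (hf : f ∈ S) (v : V) :
    (M.simpleOf S).Reachable v (M.contractMap f v) := by
  by_cases hv : v = M.snd f
  · subst hv
    rw [contractMap_snd]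
    exact (M.reachable_fst_snd hf).symm
  · rw [show M.contractMap f v = ⟨v, hv⟩ from dif_neg hv]

theorem reachable_contract_iff (S : Set {g : E // g ≠ f ∧
      M.contractMap f (M.fst g) ≠ M.contractMap f (M.snd g)}) (x y : {w : V // w ≠ M.snd f}) :
    ((M.contract f).simpleOf S).Reachable x y ↔
      (M.simpleOf (insert f (Subtype.val '' S))).Reachable x y := by
  have hf : f ∈ insert f (Subtype.val '' S) := Set.mem_insert _ _
  constructor
  · refine (M.contract f).reachable_map Subtype.val fun g hg => ?_
    exact (M.reachable_contractMap hf _).symm.trans <|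
      (M.reachable_fst_snd (Set.mem_insert_of_mem f (Set.mem_image_of_mem Subtype.val hg))).trans
        (M.reachable_contractMap hf _)
  · intro h
    rw [← M.contractMap_val x, ← M.contractMap_val y]
    refine M.reachable_map (M.contractMap f) (fun g hg => ?_) h
    obtain rfl | ⟨g, hg, rfl⟩ := hg
    · rw [contractMap_fst, contractMap_snd]
    · exact (M.contract f).reachable_fst_snd hg

theorem connected_contract_iff (S : Set {g : E // g ≠ f ∧
      M.contractMap f (M.fst g) ≠ M.contractMap f (M.snd g)}) :
    ((M.contract f).simpleOf S).Connected ↔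
      (M.simpleOf (insert f (Subtype.val '' S))).Connected := by
  have hf : f ∈ insert f (Subtype.val '' S) := Set.mem_insert _ _
  rw [SimpleGraph.connected_iff, SimpleGraph.connected_iff]
  constructor
  · rintro ⟨hpre, -⟩
    refine ⟨fun x y => ?_, ⟨M.fst f⟩⟩
    exact (M.reachable_contractMap hf x).trans <|
      ((M.reachable_contract_iff S _ _).1 (hpre _ _)).trans (M.reachable_contractMap hf y).symm
  · rintro ⟨hpre, -⟩
    exact ⟨fun x y => (M.reachable_contract_iff S x y).2 (hpre x y), ⟨⟨M.fst f, M.no_loop f⟩⟩⟩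

theorem isSpanningTree_contract_iff [Finite V] [Finite E] (S : Set {g : E // g ≠ f ∧
      M.contractMap f (M.fst g) ≠ M.contractMap f (M.snd g)}) :
    (M.contract f).IsSpanningTree S ↔ M.IsSpanningTree (insert f (Subtype.val '' S)) := by
  have hS : (insert f (Subtype.val '' S)).ncard = S.ncard + 1 := by
    rw [Set.ncard_insert_of_notMem (fun ⟨g, _, hg⟩ => g.2.1 hg : f ∉ Subtype.val '' S),
      Set.ncard_image_of_injective _ Subtype.val_injective]
  have hV := one_lt_card M f
  rw [IsSpanningTree, IsSpanningTree, connected_contract_iff, hS, Nat.card_subtype_ne]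
  exact and_congr_right fun _ => by omega

theorem tau_contract [Finite V] [Finite E] (f : E) :
    (M.contract f).tau = Nat.card {T : Set E // M.IsSpanningTree T ∧ f ∈ T} := by
  refine Nat.card_eq_of_bijective (fun S => ⟨insert f (Subtype.val '' S.1),
    (M.isSpanningTree_contract_iff S.1).1 S.2, Set.mem_insert _ _⟩) ⟨?_, ?_⟩
  · intro S S' h
    refine Subtype.ext (Set.image_injective.2 Subtype.val_injective ?_)
    rw [← Set.insert_sdiff_self_of_notMem (fun ⟨g, _, hg⟩ => g.2.1 hg : f ∉ Subtype.val '' S.1),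
      ← Set.insert_sdiff_self_of_notMem (fun ⟨g, _, hg⟩ => g.2.1 hg : f ∉ Subtype.val '' S'.1)]
    exact congrArg (· \ {f}) (congrArg Subtype.val h)
  · rintro ⟨T, hT, hfT⟩
    -- an edge of `T` parallel to `f` would be a second edge of the tree with the same ends
    have hT' : insert f (Subtype.val '' (Subtype.val ⁻¹' T : Set {g : E // g ≠ f ∧
        M.contractMap f (M.fst g) ≠ M.contractMap f (M.snd g)})) = T := by
      rw [Set.image_preimage_eq_inter_range, Subtype.range_coe_subtype]
      refine (Set.insert_subset hfT Set.inter_subset_left).antisymm fun g hg => ?_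
      by_cases hgf : g = f
      · exact Or.inl hgf
      · exact Or.inr ⟨hg, hgf, fun h => hgf (hT.injOn hg hfT
          (M.sym2_eq_of_contractMap_eq (M.no_loop g) h))⟩
    exact ⟨⟨_, (M.isSpanningTree_contract_iff _).2 (hT'.symm ▸ hT)⟩, Subtype.ext hT'⟩

end DeleteContract

section Subdivision

variable (e : E) {k : ℕ}

/-- The vertices `v₀ = fst e, v₁, …, vₖ, vₖ₊₁ = snd e` of the path replacing `e` in
`M.subdivide e k`, the new vertex `vₘ` being `inr (m - 1)`. -/
def pathVertex (k m : ℕ) : V ⊕ Fin k :=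
  if h₀ : m = 0 then .inl (M.fst e)
  else if h : m ≤ k then .inr ⟨m - 1, by omega⟩
  else .inl (M.snd e)

theorem subdivide_fst_inr (j : Fin (k + 1)) :
    (M.subdivide e k).fst (.inr j) = M.pathVertex e k j := by
  simp only [subdivide, pathVertex]
  split_ifs <;> first | rfl | omega

theorem subdivide_snd_inr (j : Fin (k + 1)) :
    (M.subdivide e k).snd (.inr j) = M.pathVertex e k (j + 1) := by
  simp only [subdivide, pathVertex]
  split_ifs <;> first | rfl | omega | simp_all

theorem inr_eq_pathVertex (m : Fin k) : (.inr m : V ⊕ Fin k) = M.pathVertex e k (m + 1) := by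
  simp [pathVertex, Nat.succ_le_of_lt m.isLt]

theorem pathVertex_zero : M.pathVertex e k 0 = .inl (M.fst e) := rfl

theorem pathVertex_succ_self : M.pathVertex e k (k + 1) = .inl (M.snd e) := by
  simp [pathVertex]

theorem reachable_pathVertex {S : Set ({e' : E // e' ≠ e} ⊕ Fin (k + 1))} {a b : ℕ}
    (hab : a ≤ b) (hb : b ≤ k + 1) (hS : ∀ j : Fin (k + 1), a ≤ j → (j : ℕ) < b → .inr j ∈ S) :
    ((M.subdivide e k).simpleOf S).Reachable (M.pathVertex e k a) (M.pathVertex e k b) := by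
  induction b, hab using Nat.le_induction with
  | base => rfl
  | succ b hab ih =>
    refine (ih (by omega) fun j h₁ h₂ => hS j h₁ (by omega)).trans ?_
    have := (M.subdivide e k).reachable_fst_snd (hS ⟨b, by omega⟩ hab (by simp))
    rwa [subdivide_fst_inr, subdivide_snd_inr] at this

def subdivideSet (T : Set E) (j : Fin (k + 1)) : Set ({e' : E // e' ≠ e} ⊕ Fin (k + 1)) :=
  {x | Sum.elim (fun g => g.1 ∈ T) (fun j' => j' ≠ j ∨ e ∈ T) x}

variable {e}

@[simp]
theorem inl_mem_subdivideSet {T : Set E} {j : Fin (k + 1)} {g : {e' : E // e' ≠ e}} :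
    .inl g ∈ subdivideSet e T j ↔ g.1 ∈ T :=
  Iff.rfl

@[simp]
theorem inr_mem_subdivideSet {T : Set E} {j j' : Fin (k + 1)} :
    .inr j' ∈ subdivideSet e T j ↔ j' ≠ j ∨ e ∈ T :=
  Iff.rfl

theorem ncard_subdivideSet [Finite E] (T : Set E) (j : Fin (k + 1)) :
    (subdivideSet e T j).ncard = T.ncard + k := by
  rw [← Set.image_preimage_inl_union_image_preimage_inr (subdivideSet e T j),
    Set.ncard_union_eq (Set.disjoint_image_inl_image_inr),
    Set.ncard_image_of_injective _ Sum.inl_injective,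
    Set.ncard_image_of_injective _ Sum.inr_injective]
  have hold : (Sum.inl ⁻¹' subdivideSet e T j).ncard = (T \ {e}).ncard := by
    change (Subtype.val ⁻¹' T : Set {e' : E // e' ≠ e}).ncard = _
    rw [← Set.ncard_image_of_injective _ Subtype.val_injective,
      Set.image_preimage_eq_inter_range, Subtype.range_coe_subtype]
    rfl
  rw [hold]
  by_cases he : e ∈ T
  · have hpath : Sum.inr ⁻¹' subdivideSet e T j = Set.univ := by ext; simp [he]
    rw [hpath, Set.ncard_univ, Nat.card_fin, ← Set.ncard_sdiff_singleton_add_one he]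
    ring
  · have hpath : Sum.inr ⁻¹' subdivideSet e T j = {j}ᶜ := by ext; simp [he]
    rw [hpath, Set.ncard_compl, Set.sdiff_singleton_eq_self he]
    simp

variable (e) in
/-- Collapses the path onto `e`, contracting every path edge except the `j`-th. -/
def collapse (j : ℕ) : V ⊕ Fin k → V :=
  Sum.elim id fun m => if (m : ℕ) < j then M.fst e else M.snd e

theorem collapse_pathVertex {j m : ℕ} (hj : j ≤ k) (hm : m ≤ k + 1) :
    M.collapse e j (M.pathVertex e k m) = if m ≤ j then M.fst e else M.snd e := by
  unfold collapse pathVertex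
  split_ifs <;> simp only [Sum.elim_inl, Sum.elim_inr, id] <;> (try split_ifs) <;>
    first | rfl | omega

theorem reachable_collapse {T : Set E} {j : Fin (k + 1)} {x y : V ⊕ Fin k}
    (h : ((M.subdivide e k).simpleOf (subdivideSet e T j)).Reachable x y) :
    (M.simpleOf T).Reachable (M.collapse e j x) (M.collapse e j y) := by
  refine (M.subdivide e k).reachable_map _ (fun f hf => ?_) h
  rcases f with g | j'
  · exact M.reachable_fst_snd hf
  · have hj := Nat.lt_succ_iff.1 j.isLt
    rw [subdivide_fst_inr, subdivide_snd_inr, collapse_pathVertex _ hj (by omega),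
      collapse_pathVertex _ hj (by omega)]
    obtain hne | he := hf
    · have := Fin.val_ne_of_ne hne
      split_ifs <;> first | rfl | omega
    · split_ifs <;> first | rfl | omega | exact M.reachable_fst_snd he

theorem reachable_inl_of_reachable {T : Set E} (j : Fin (k + 1)) {x y : V}
    (h : (M.simpleOf T).Reachable x y) :
    ((M.subdivide e k).simpleOf (subdivideSet e T j)).Reachable (.inl x) (.inl y) := by
  refine M.reachable_map _ (fun g hg => ?_) h
  by_cases hge : g = e
  · subst hge
    rw [← pathVertex_zero, ← pathVertex_succ_self]
    exact M.reachable_pathVertex g (Nat.zero_le _) le_rfl fun _ _ _ => Or.inr hg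
  · exact (M.subdivide e k).reachable_fst_snd (f := .inl ⟨g, hge⟩) hg

theorem exists_reachable_inl {T : Set E} (j : Fin (k + 1)) (x : V ⊕ Fin k) :
    ∃ v, ((M.subdivide e k).simpleOf (subdivideSet e T j)).Reachable x (.inl v) := by
  rcases x with v | m
  · exact ⟨v, .rfl⟩
  have := m.isLt
  rw [inr_eq_pathVertex]
  by_cases hm : (m : ℕ) < j
  · refine ⟨M.fst e, ?_⟩
    rw [← pathVertex_zero]
    exact (M.reachable_pathVertex e (Nat.zero_le _) (by omega)
      fun j' _ h => Or.inl (Fin.ne_of_lt (by omega))).symm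
  · refine ⟨M.snd e, ?_⟩
    rw [← pathVertex_succ_self]
    exact M.reachable_pathVertex e (by omega) le_rfl
      fun j' h _ => Or.inl (Fin.ne_of_gt (by omega))

theorem connected_subdivideSet_iff (T : Set E) (j : Fin (k + 1)) :
    ((M.subdivide e k).simpleOf (subdivideSet e T j)).Connected ↔ (M.simpleOf T).Connected := by
  rw [SimpleGraph.connected_iff, SimpleGraph.connected_iff]
  constructor
  · rintro ⟨hpre, -⟩
    exact ⟨fun x y => M.reachable_collapse (hpre (.inl x) (.inl y)), ⟨M.fst e⟩⟩
  · rintro ⟨hpre, -⟩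
    refine ⟨fun x y => ?_, ⟨.inl (M.fst e)⟩⟩
    obtain ⟨u, hu⟩ := M.exists_reachable_inl j x
    obtain ⟨v, hv⟩ := M.exists_reachable_inl j y
    exact hu.trans ((M.reachable_inl_of_reachable j (hpre u v)).trans hv.symm)

theorem isSpanningTree_subdivideSet_iff [Finite V] [Finite E] (T : Set E) (j : Fin (k + 1)) :
    (M.subdivide e k).IsSpanningTree (subdivideSet e T j) ↔ M.IsSpanningTree T := by
  have hV := one_lt_card M e
  rw [IsSpanningTree, IsSpanningTree, connected_subdivideSet_iff, ncard_subdivideSet,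
    Nat.card_sum, Nat.card_eq_fintype_card (α := Fin k), Fintype.card_fin]
  exact and_congr_right fun _ => by omega

end Subdivision

section SubdivisionTrees

variable {e : E} {k : ℕ}

theorem not_connected_of_inr_notMem {S : Set ({e' : E // e' ≠ e} ⊕ Fin (k + 1))}
    {a b : Fin (k + 1)} (hab : a < b) (ha : .inr a ∉ S) (hb : .inr b ∉ S) :
    ¬((M.subdivide e k).simpleOf S).Connected := by
  intro hS
  -- no edge of `S` leaves the vertices strictly between the two missing edges
  let inside : V ⊕ Fin k → Prop := Sum.elim (fun _ => False) fun m => a ≤ (m : ℕ) ∧ (m : ℕ) < b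
  have hb' := Nat.lt_succ_iff.1 b.isLt
  have inside_pathVertex : ∀ m ≤ k + 1, inside (M.pathVertex e k m) ↔ (a < m ∧ m ≤ b) := by
    intro m hm
    unfold pathVertex
    split_ifs <;> simp only [inside, Sum.elim_inl, Sum.elim_inr] <;>
      grind
  have := (M.subdivide e k).reachable_map (H := ⊥) inside (fun f hf => ?_)
    (hS.preconnected (M.pathVertex e k 0) (M.pathVertex e k (a + 1)))
  · rw [SimpleGraph.reachable_bot, eq_iff_iff, inside_pathVertex _ (by omega),
      inside_pathVertex _ (by omega)] at this
    simp_all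
  · rw [SimpleGraph.reachable_bot]
    rcases f with g | j
    · rfl
    · have hja : j ≠ a := fun h => ha (h ▸ hf)
      have hjb : j ≠ b := fun h => hb (h ▸ hf)
      rw [subdivide_fst_inr, subdivide_snd_inr, eq_iff_iff, inside_pathVertex _ (by omega),
        inside_pathVertex _ (by omega)]
      omega

variable {M} in
theorem IsSpanningTree.exists_eq_subdivideSet {S : Set ({e' : E // e' ≠ e} ⊕ Fin (k + 1))}
    (hS : (M.subdivide e k).IsSpanningTree S) : ∃ T j, S = subdivideSet e T j := by
  by_cases hall : ∀ j, .inr j ∈ S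
  · refine ⟨insert e (Subtype.val '' (Sum.inl ⁻¹' S)), 0, ?_⟩
    ext (g | j)
    · simp [g.2]
    · simp [hall]
  · push Not at hall
    obtain ⟨j, hj⟩ := hall
    refine ⟨Subtype.val '' (Sum.inl ⁻¹' S), j, ?_⟩
    ext (g | j')
    · simp [g.2]
    · have he : e ∉ Subtype.val '' (Sum.inl ⁻¹' S) := fun ⟨g, _, hg⟩ => g.2 hg
      rw [inr_mem_subdivideSet, or_iff_left he]
      refine ⟨fun hj'S hj' => hj (hj' ▸ hj'S), fun hj' => by_contra fun hj'S => ?_⟩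
      rcases lt_or_gt_of_ne hj' with h | h
      exacts [M.not_connected_of_inr_notMem h hj'S hj hS.1,
        M.not_connected_of_inr_notMem h hj hj'S hS.1]

theorem forall_inr_mem_subdivideSet_iff {T : Set E} {j : Fin (k + 1)} :
    (∀ j', .inr j' ∈ subdivideSet e T j) ↔ e ∈ T :=
  ⟨fun h => (h j).resolve_left (not_ne_iff.2 rfl), fun he _ => Or.inr he⟩

theorem eq_of_subdivideSet_eq {T T' : Set E} {j j' : Fin (k + 1)}
    (h : subdivideSet e T j = subdivideSet e T' j') : T = T' := by
  ext g
  by_cases hg : g = e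
  · subst hg
    rw [← forall_inr_mem_subdivideSet_iff (j := j), ← forall_inr_mem_subdivideSet_iff (j := j'), h]
  · rw [← inl_mem_subdivideSet (j := j) (g := ⟨g, hg⟩),
      ← inl_mem_subdivideSet (j := j') (g := ⟨g, hg⟩), h]

theorem eq_of_subdivideSet_eq_of_notMem {T T' : Set E} {j j' : Fin (k + 1)} (he : e ∉ T)
    (h : subdivideSet e T j = subdivideSet e T' j') : j = j' := by
  have hj : .inr j ∉ subdivideSet e T' j' := h ▸ by simp [he]
  simpa [eq_of_subdivideSet_eq h ▸ he] using hj

theorem subdivideSet_eq_of_mem {T : Set E} (he : e ∈ T) (j j' : Fin (k + 1)) :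
    subdivideSet e T j = subdivideSet e T j' := by
  ext (g | j'') <;> simp [he]

end SubdivisionTrees

section Counting

variable [Finite V] [Finite E] (e : E) (k : ℕ) (i : Fin (k + 1))

theorem tau_subdivide_delete :
    ((M.subdivide e k).delete (.inr i)).tau = (M.delete e).tau := by
  rw [tau_delete, tau_delete]
  symm
  refine Nat.card_eq_of_bijective (fun T => ⟨subdivideSet e T.1 i,
    (M.isSpanningTree_subdivideSet_iff T.1 i).2 T.2.1, by simp [T.2.2]⟩)
    ⟨fun T T' h => Subtype.ext (eq_of_subdivideSet_eq (congrArg Subtype.val h)), ?_⟩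
  rintro ⟨S, hS, hiS⟩
  obtain ⟨T, j, rfl⟩ := hS.exists_eq_subdivideSet
  obtain ⟨rfl, he⟩ : i = j ∧ e ∉ T := by simpa using hiS
  exact ⟨⟨T, (M.isSpanningTree_subdivideSet_iff T i).1 hS, he⟩, rfl⟩

theorem tau_subdivide_contract :
    ((M.subdivide e k).contract (.inr i)).tau = k * (M.delete e).tau + (M.contract e).tau := by
  have hk : Nat.card {j : Fin (k + 1) // j ≠ i} = k := by simp
  rw [tau_delete, tau_contract, tau_contract]
  conv_rhs => rw [← hk, ← Nat.card_prod, ← Nat.card_sum]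
  symm
  refine Nat.card_eq_of_bijective (Sum.elim
    (fun p => ⟨subdivideSet e p.2.1 p.1, (M.isSpanningTree_subdivideSet_iff _ _).2 p.2.2.1,
      by simp [p.1.2.symm]⟩)
    (fun T => ⟨subdivideSet e T.1 i, (M.isSpanningTree_subdivideSet_iff _ _).2 T.2.1,
      by simp [T.2.2]⟩)) ⟨?_, ?_⟩
  · rintro (⟨⟨j, _⟩, T, _, he⟩ | ⟨T, _, he⟩) (⟨⟨j', _⟩, T', _, he'⟩ | ⟨T', _, he'⟩) h
    all_goals replace h := congrArg Subtype.val h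
    · obtain rfl : T = T' := eq_of_subdivideSet_eq h
      obtain rfl := eq_of_subdivideSet_eq_of_notMem he h
      rfl
    · exact (he ((eq_of_subdivideSet_eq h : T = T') ▸ he')).elim
    · exact (he' ((eq_of_subdivideSet_eq h : T = T') ▸ he)).elim
    · obtain rfl : T = T' := eq_of_subdivideSet_eq h
      rfl
  · rintro ⟨S, hS, hiS⟩
    obtain ⟨T, j, rfl⟩ := hS.exists_eq_subdivideSet
    have hT := (M.isSpanningTree_subdivideSet_iff T j).1 hS
    by_cases he : e ∈ T
    · exact ⟨.inr ⟨T, hT, he⟩, Subtype.ext (subdivideSet_eq_of_mem he i j)⟩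
    · have hij : j ≠ i := fun h => by simp [h, he] at hiS
      exact ⟨.inl ⟨⟨j, hij⟩, T, hT, he⟩, rfl⟩

end Counting

end Multigraph

theorem tau_subdivide_general {V E : Type} [Fintype V] [Fintype E] (M : Multigraph V E) (e : E)
    (k : ℕ) (i : Fin (k + 1)) :
    ((M.subdivide e k).delete (.inr i)).tau = (M.delete e).tau ∧
    ((M.subdivide e k).contract (.inr i)).tau =
      k * (M.delete e).tau + (M.contract e).tau :=
  ⟨M.tau_subdivide_delete e k i, M.tau_subdivide_contract e k i⟩

/-- Subdividing the marked edge: if `(G', e')` is obtained from the marked connected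
graph `(G, e)` by replacing `e` with a path of length `k+1` and marking one of the new
edges `e'`, then `τ(G'−e') = τ(G−e)` and `τ(G'/e') = k·τ(G−e) + τ(G/e)`. -/
theorem tau_subdivide {V E : Type} [Fintype V] [Fintype E] (M : Multigraph V E) (e : E)
    (hconn : (M.simpleOf Set.univ).Connected)
    (hdel : 0 < (M.delete e).tau) (hcon : 0 < (M.contract e).tau)
    (k : ℕ) (i : Fin (k + 1)) :
    ((M.subdivide e k).delete (.inr i)).tau = (M.delete e).tau ∧
    ((M.subdivide e k).contract (.inr i)).tau =
      k * (M.delete e).tau + (M.contract e).tau :=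
  tau_subdivide_general M e k i
end

section
/- For every integer q ≥ 2, the reduction modulo q of the semigroup generated by the matrices M_b = [[0,1],[1,1]]·[[0,1],[1,b]] for 1 ≤ b ≤ A (with A ≥ 2) equals all of SL(2, ℤ/qℤ). -/
open Matrix

namespace SL2Gen

variable {R : Type*} [CommRing R]

def e12 (x : R) : Matrix.SpecialLinearGroup (Fin 2) R :=
  ⟨!![1, x; 0, 1], by simp [Matrix.det_fin_two_of]⟩

def e21 (x : R) : Matrix.SpecialLinearGroup (Fin 2) R :=
  ⟨!![1, 0; x, 1], by simp [Matrix.det_fin_two_of]⟩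

def sNeg : Matrix.SpecialLinearGroup (Fin 2) R :=
  ⟨!![0, -1; 1, 0], by simp [Matrix.det_fin_two_of]⟩

lemma upper_tri_eq (a b d : R) (h : a * d = 1) (g : Matrix.SpecialLinearGroup (Fin 2) R)
    (hg : (g : Matrix (Fin 2) (Fin 2) R) = !![a, b; 0, d]) :
    g = e12 a * e21 (-d) * e12 a * sNeg * e12 (d * b) := by
  apply Subtype.ext
  show (g : Matrix (Fin 2) (Fin 2) R)
      = !![1, a; 0, 1] * !![1, 0; -d, 1] * !![1, a; 0, 1] * !![0, -1; 1, 0] * !![1, d * b; 0, 1]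
  rw [hg]
  simp only [Matrix.mul_fin_two]
  ext i j
  fin_cases i <;> fin_cases j <;> simp
  · linear_combination (-a) * h
  · linear_combination (a * d * b - b - 1) * h
  · linear_combination h
  · linear_combination (-(d * b)) * h

lemma sNeg_eq : (sNeg : Matrix.SpecialLinearGroup (Fin 2) R) = e12 (-1) * e21 1 * e12 (-1) := by
  apply Subtype.ext
  show (!![0, -1; 1, 0] : Matrix (Fin 2) (Fin 2) R)
      = !![1, -1; 0, 1] * !![1, 0; 1, 1] * !![1, -1; 0, 1]
  simp only [Matrix.mul_fin_two]
  norm_num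

lemma e12_mul (x y : R) : e12 x * e12 y = e12 (x + y) := by
  apply Subtype.ext
  show (!![1, x; 0, 1] : Matrix (Fin 2) (Fin 2) R) * !![1, y; 0, 1] = !![1, x + y; 0, 1]
  simp only [Matrix.mul_fin_two, add_comm, mul_one, one_mul, mul_zero, zero_mul, add_zero, zero_add]

lemma e21_mul (x y : R) : e21 x * e21 y = e21 (x + y) := by
  apply Subtype.ext
  show (!![1, 0; x, 1] : Matrix (Fin 2) (Fin 2) R) * !![1, 0; y, 1] = !![1, 0; x + y, 1]
  simp only [Matrix.mul_fin_two, add_comm, mul_one, one_mul, mul_zero, zero_mul, add_zero, zero_add]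

lemma e12_zero : (e12 (0 : R)) = 1 := by
  apply Subtype.ext
  show (!![1, 0; 0, 1] : Matrix (Fin 2) (Fin 2) R) = 1
  simp [Matrix.one_fin_two]

lemma e21_zero : (e21 (0 : R)) = 1 := by
  apply Subtype.ext
  show (!![1, 0; 0, 1] : Matrix (Fin 2) (Fin 2) R) = 1
  simp [Matrix.one_fin_two]

lemma e12_pow (k : ℕ) : (e12 (1 : R)) ^ k = e12 (k : R) := by
  induction k with
  | zero => simp [e12_zero]
  | succ n ih => rw [pow_succ, ih, e12_mul]; norm_num

lemma e21_pow (k : ℕ) : (e21 (1 : R)) ^ k = e21 (k : R) := by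
  induction k with
  | zero => simp [e21_zero]
  | succ n ih => rw [pow_succ, ih, e21_mul]; norm_num

section

variable {q : ℕ} [NeZero q]

lemma valCast (a : ZMod q) : ((a.val : ZMod q)) = a := ZMod.natCast_rightInverse a

/-- A subgroup of `SL(2, ZMod q)` containing the two elementary matrices is everything. -/
lemma mem_of_gen (H : Subgroup (Matrix.SpecialLinearGroup (Fin 2) (ZMod q)))
    (hT : e12 (1 : ZMod q) ∈ H) (hL : e21 (1 : ZMod q) ∈ H)
    (g : Matrix.SpecialLinearGroup (Fin 2) (ZMod q)) : g ∈ H := by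
  have hE12 : ∀ x : ZMod q, e12 x ∈ H := fun x => by
    rw [← valCast x, ← e12_pow]; exact pow_mem hT _
  have hE21 : ∀ x : ZMod q, e21 x ∈ H := fun x => by
    rw [← valCast x, ← e21_pow]; exact pow_mem hL _
  have hS : (sNeg : Matrix.SpecialLinearGroup (Fin 2) (ZMod q)) ∈ H := by
    rw [sNeg_eq]; exact mul_mem (mul_mem (hE12 _) (hE21 _)) (hE12 _)
  suffices key : ∀ n : ℕ, ∀ g : Matrix.SpecialLinearGroup (Fin 2) (ZMod q),
      (g.1 1 0).val = n → g ∈ H from key _ g rfl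
  intro n
  induction n using Nat.strong_induction_on with
  | _ n ih =>
  intro g hg
  have hdet : g.1 0 0 * g.1 1 1 - g.1 0 1 * g.1 1 0 = 1 := by
    have h2 := g.2
    rw [Matrix.det_fin_two] at h2
    exact h2
  rcases Nat.eq_zero_or_pos n with h0 | hpos
  · -- lower-left entry is zero
    have hc : g.1 1 0 = 0 := by
      rw [← ZMod.val_eq_zero]; omega
    have had : g.1 0 0 * g.1 1 1 = 1 := by
      rw [hc] at hdet; simpa using hdet
    have hrepr := upper_tri_eq (g.1 0 0) (g.1 0 1) (g.1 1 1) had g (by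
      conv_lhs => rw [Matrix.eta_fin_two g.1]
      rw [hc])
    rw [hrepr]
    exact mul_mem (mul_mem (mul_mem (mul_mem (hE12 _) (hE21 _)) (hE12 _)) hS) (hE12 _)
  · -- Euclidean step
    set a := g.1 0 0 with ha
    set c := g.1 1 0 with hcdef
    have hcval : c.val = n := hg
    set t := a.val / c.val with htdef
    set r := a.val % c.val with hrdef
    have hrn : r < n := by
      rw [← hcval]; exact Nat.mod_lt _ (by omega)
    have harith : a - (t : ZMod q) * c = ((r : ℕ) : ZMod q) := by
      have h1 : t * c.val ≤ a.val := by
        rw [htdef, mul_comm]; exact Nat.mul_div_le a.val c.val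
      have h2 : a.val - t * c.val = r := by
        have h3 := Nat.div_add_mod a.val c.val
        rw [htdef, hrdef, mul_comm]
        omega
      calc a - (t : ZMod q) * c
          = ((a.val : ZMod q)) - (((t * c.val : ℕ) : ZMod q)) := by
            rw [valCast, Nat.cast_mul, valCast]
        _ = (((a.val - t * c.val : ℕ)) : ZMod q) := by
            rw [Nat.cast_sub h1]
        _ = ((r : ℕ) : ZMod q) := by rw [h2]
    set g' := sNeg * (e12 (-(t : ZMod q)) * g) with hg'
    have h10 : g'.1 1 0 = ((r : ℕ) : ZMod q) := by
      have hcoe : g'.1 = !![(0 : ZMod q), -1; 1, 0] * (!![1, -(t : ZMod q); 0, 1] * g.1) := rfl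
      rw [hcoe, Matrix.eta_fin_two g.1, Matrix.mul_fin_two, Matrix.mul_fin_two]
      simp
      rw [← harith]
      ring
    have hval : (g'.1 1 0).val = r := by
      rw [h10, ZMod.val_cast_of_lt]
      calc r < c.val := by omega
        _ < q := ZMod.val_lt c
    have hmem' : g' ∈ H := ih r (by omega) g' hval
    have : g = (e12 (-(t : ZMod q)))⁻¹ * (sNeg⁻¹ * g') := by
      rw [hg', inv_mul_cancel_left, inv_mul_cancel_left]
    rw [this]
    exact mul_mem (inv_mem (hE12 _)) (mul_mem (inv_mem hS) hmem')

end
end SL2Gen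

/-- The generator `M_b = [[0,1],[1,1]] · [[0,1],[1,b]]`. -/
def genMat (b : ℕ) : Matrix (Fin 2) (Fin 2) ℤ :=
  !![(0 : ℤ), 1; 1, 1] * !![(0 : ℤ), 1; 1, (b : ℤ)]

namespace SL2Gen

lemma genMat_eq (b : ℕ) : genMat b = !![(1 : ℤ), (b : ℤ); 1, (b : ℤ) + 1] := by
  unfold genMat
  simp only [Matrix.mul_fin_two]
  norm_num [add_comm]

lemma genMat_det (b : ℕ) : (genMat b).det = 1 := by
  rw [genMat_eq, Matrix.det_fin_two_of]
  ring

variable (q : ℕ) [NeZero q]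

/-- The generator reduced mod `q`, as an element of `SL(2, ZMod q)`. -/
def genSL (b : ℕ) : Matrix.SpecialLinearGroup (Fin 2) (ZMod q) :=
  ⟨(genMat b).map (Int.cast : ℤ → ZMod q), by
    have : (genMat b).map (Int.cast : ℤ → ZMod q)
        = (Int.castRingHom (ZMod q)).mapMatrix (genMat b) := rfl
    rw [this, ← RingHom.map_det, genMat_det]
    simp⟩

lemma genSL_coe (b : ℕ) :
    ((genSL q b : Matrix.SpecialLinearGroup (Fin 2) (ZMod q)) : Matrix (Fin 2) (Fin 2) (ZMod q))
      = !![(1 : ZMod q), (b : ZMod q); 1, (b : ZMod q) + 1] := by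
  show (genMat b).map (Int.cast : ℤ → ZMod q) = _
  rw [genMat_eq]
  ext i j
  fin_cases i <;> fin_cases j <;> simp [Matrix.map_apply] <;> push_cast <;> ring

lemma genSL_one_eq : genSL q 1 = e21 (1 : ZMod q) * e12 (1 : ZMod q) := by
  apply Subtype.ext
  rw [genSL_coe]
  show _ = (!![1, 0; 1, 1] : Matrix (Fin 2) (Fin 2) (ZMod q)) * !![1, 1; 0, 1]
  simp only [Matrix.mul_fin_two]
  norm_num

lemma genSL_two_eq : genSL q 2 = genSL q 1 * e12 (1 : ZMod q) := by
  apply Subtype.ext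
  show _ = ((genSL q 1 : Matrix.SpecialLinearGroup (Fin 2) (ZMod q)) :
      Matrix (Fin 2) (Fin 2) (ZMod q)) * !![1, 1; 0, 1]
  rw [genSL_coe, genSL_coe]
  simp only [Matrix.mul_fin_two]
  norm_num

/-- In a monoid, positive powers stay in a subsemigroup. -/
lemma pow_mem_subsemigroup {M : Type*} [Monoid M] {S : Subsemigroup M} {x : M} (hx : x ∈ S) :
    ∀ n : ℕ, n ≠ 0 → x ^ n ∈ S := by
  intro n hn
  induction n with
  | zero => exact absurd rfl hn
  | succ m ih =>
    rcases Nat.eq_zero_or_pos m with hm | hm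
    · subst hm; simpa using hx
    · rw [pow_succ]
      exact mul_mem (ih (by omega)) hx

end SL2Gen

open SL2Gen in
/-- For `A ≥ 2` and `q ≥ 2`, the reduction mod `q` of the semigroup generated by the
matrices `M_b`, `1 ≤ b ≤ A`, is all of `SL(2, ℤ/qℤ)`. -/
theorem semigroup_mod_q_surjective (A : ℕ) (hA : 2 ≤ A) (q : ℕ) (hq : 2 ≤ q) :
    (fun m : Matrix (Fin 2) (Fin 2) ℤ => m.map (Int.cast : ℤ → ZMod q)) ''
        (Subsemigroup.closure {m | ∃ b : ℕ, 1 ≤ b ∧ b ≤ A ∧ m = genMat b} : Set _) =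
      {g : Matrix (Fin 2) (Fin 2) (ZMod q) | g.det = 1} := by
  haveI : NeZero q := ⟨by omega⟩
  set Sint : Set (Matrix (Fin 2) (Fin 2) ℤ) := {m | ∃ b : ℕ, 1 ≤ b ∧ b ≤ A ∧ m = genMat b}
    with hSint
  set gens : Set (Matrix.SpecialLinearGroup (Fin 2) (ZMod q)) :=
    {x | ∃ b : ℕ, 1 ≤ b ∧ b ≤ A ∧ x = genSL q b} with hgens
  -- the subsemigroup closure of `gens` in `SL(2, ZMod q)` is a subgroup
  have hfin : Finite (Matrix.SpecialLinearGroup (Fin 2) (ZMod q)) := inferInstance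
  have hone : (1 : Matrix.SpecialLinearGroup (Fin 2) (ZMod q)) ∈ Subsemigroup.closure gens := by
    have hx : genSL q 1 ∈ Subsemigroup.closure gens :=
      Subsemigroup.subset_closure ⟨1, le_refl 1, by omega, rfl⟩
    have hn : orderOf (genSL q 1) ≠ 0 := (orderOf_pos _).ne'
    have h := pow_mem_subsemigroup hx _ hn
    rwa [pow_orderOf_eq_one] at h
  let K : Subgroup (Matrix.SpecialLinearGroup (Fin 2) (ZMod q)) :=
  { carrier := (Subsemigroup.closure gens : Set _)
    mul_mem' := fun hx hy => mul_mem hx hy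
    one_mem' := hone
    inv_mem' := fun {x} hx => by
      rcases Nat.lt_or_ge (orderOf x) 2 with h | h
      · have h1 : orderOf x = 1 := by have := orderOf_pos x; omega
        have hx1 : x = 1 := orderOf_eq_one_iff.mp h1
        rw [hx1, inv_one]
        exact hone
      · have hinv : x⁻¹ = x ^ (orderOf x - 1) := by
          have hmul : x * x ^ (orderOf x - 1) = 1 := by
            rw [← pow_succ']
            have : orderOf x - 1 + 1 = orderOf x := by omega
            rw [this, pow_orderOf_eq_one]
          exact inv_eq_of_mul_eq_one_right hmul
        rw [hinv]
        exact pow_mem_subsemigroup hx _ (by omega) }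
  have hg1K : genSL q 1 ∈ K := Subsemigroup.subset_closure ⟨1, le_refl 1, by omega, rfl⟩
  have hg2K : genSL q 2 ∈ K := Subsemigroup.subset_closure ⟨2, by omega, hA, rfl⟩
  have hTK : e12 (1 : ZMod q) ∈ K := by
    have he : e12 (1 : ZMod q) = (genSL q 1)⁻¹ * genSL q 2 := by
      rw [genSL_two_eq]; group
    rw [he]
    exact mul_mem (inv_mem hg1K) hg2K
  have hLK : e21 (1 : ZMod q) ∈ K := by
    have he : e21 (1 : ZMod q) = genSL q 1 * (e12 (1 : ZMod q))⁻¹ := by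
      rw [genSL_one_eq]; group
    rw [he]
    exact mul_mem hg1K (inv_mem hTK)
  have hall : ∀ g : Matrix.SpecialLinearGroup (Fin 2) (ZMod q),
      g ∈ Subsemigroup.closure gens := fun g => mem_of_gen K hTK hLK g
  -- final set equality
  apply Set.Subset.antisymm
  · rintro x ⟨m, hm, rfl⟩
    have key : ∀ m' ∈ Subsemigroup.closure Sint,
        (m'.map (Int.cast : ℤ → ZMod q)).det = 1 := by
      intro m' hm'
      induction hm' using Subsemigroup.closure_induction with
      | mem y hy =>
        obtain ⟨b, _, _, rfl⟩ := hy
        have h0 : (genMat b).map (Int.cast : ℤ → ZMod q)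
            = (Int.castRingHom (ZMod q)).mapMatrix (genMat b) := rfl
        rw [h0, ← RingHom.map_det, genMat_det]
        simp
      | mul y z _ _ hy hz =>
        have h0 : ((y * z).map (Int.cast : ℤ → ZMod q))
            = y.map (Int.cast : ℤ → ZMod q) * z.map (Int.cast : ℤ → ZMod q) :=
          ((Int.castRingHom (ZMod q)).mapMatrix : Matrix (Fin 2) (Fin 2) ℤ →+* _).map_mul y z
        rw [h0, Matrix.det_mul, hy, hz, one_mul]
    exact key m hm
  · intro x hx
    set g : Matrix.SpecialLinearGroup (Fin 2) (ZMod q) := ⟨x, hx⟩ with hgdef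
    have hg := hall g
    set ι : Matrix.SpecialLinearGroup (Fin 2) (ZMod q) →ₙ* Matrix (Fin 2) (Fin 2) (ZMod q) :=
      ⟨fun y => y.1, fun a b => rfl⟩ with hι
    set fm : Matrix (Fin 2) (Fin 2) ℤ →ₙ* Matrix (Fin 2) (Fin 2) (ZMod q) :=
      ⟨fun m => m.map (Int.cast : ℤ → ZMod q), fun a b =>
        ((Int.castRingHom (ZMod q)).mapMatrix : Matrix (Fin 2) (Fin 2) ℤ →+* _).map_mul a b⟩
      with hfm
    have h1 : x ∈ (Subsemigroup.closure gens).map ι := ⟨g, hg, rfl⟩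
    rw [MulHom.map_mclosure] at h1
    have h2 : Subsemigroup.closure (ι '' gens) ≤ (Subsemigroup.closure Sint).map fm := by
      rw [Subsemigroup.closure_le]
      rintro _ ⟨y, ⟨b, hb1, hb2, rfl⟩, rfl⟩
      exact ⟨genMat b, Subsemigroup.subset_closure ⟨b, hb1, hb2, rfl⟩, rfl⟩
    obtain ⟨m, hm, hmx⟩ := h2 h1
    exact ⟨m, hm, hmx⟩
end

section
/- Let f be a polynomial (with real coefficients) expanded as f(x) = Σ_{n=0}^N a_n (x−1)^n, and let s > 1/2. Then for every x ∈ [0,1] the infinite sum Σ_{b=1}^∞ (1+b+x)^{−2s} · f(T_b(x)) converges and equals Σ_{n=0}^N a_n (−1)^n ζ(2s+n, 2+x), where ζ(s, x) = Σ_{b=0}^∞ (b+x)^{−s} is the Hurwitz zeta function and T_b(x) = (b+x)/(1+b+x). -/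
/-!
Writing `y = 1 + b + x`, one has `T_b(x) - 1 = -1/y`, so the `n`-th term of `f ∘ T_b`, weighted
by `y^{-2s}`, is `aₙ (-1)ⁿ y^{-(2s+n)}`. Summing over `b ≥ 1` gives `aₙ (-1)ⁿ ζ(2s+n, 2+x)`, and
the finitely many convergent series can be added termwise.
-/

/-- The Hurwitz zeta function `ζ(s, x) = Σ_{b ≥ 0} (b + x)^{-s}`. -/
noncomputable def hurwitzZetaReal (s x : ℝ) : ℝ :=
  ∑' b : ℕ, ((b : ℝ) + x) ^ (-s)

lemma summable_nat_add_rpow_neg {c p : ℝ} (hc : 0 ≤ c) (hp : 1 < p) :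
    Summable fun b : ℕ => ((b : ℝ) + c) ^ (-p) := by
  refine ((Real.summable_one_div_nat_add_rpow c p).2 hp).congr fun b => ?_
  rw [abs_of_nonneg (by positivity), one_div, Real.rpow_neg (by positivity)]

lemma hasSum_hurwitzZetaReal {s x : ℝ} (hs : 1 < s) (hx : 0 ≤ x) :
    HasSum (fun b : ℕ => ((b : ℝ) + x) ^ (-s)) (hurwitzZetaReal s x) :=
  (summable_nat_add_rpow_neg hx hs).hasSum

lemma rpow_neg_mul_div_sub_one_pow {y : ℝ} (hy : 0 < y) (r : ℝ) (n : ℕ) :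
    y ^ (-r) * ((y - 1) / y - 1) ^ n = (-1) ^ n * y ^ (-(r + n)) := by
  have hT : (y - 1) / y - 1 = -y⁻¹ := by
    field_simp
    ring
  rw [hT, neg_pow, inv_pow, ← Real.rpow_natCast y n, ← Real.rpow_neg hy.le, neg_add,
    Real.rpow_add hy]
  ring

/-- For a polynomial `f(x) = Σ_{n=0}^N aₙ (x−1)ⁿ` and `s > 1/2`, for every `x ∈ [0,1]`
the sum `Σ_{b ≥ 1} (1+b+x)^{−2s} f(T_b(x))` converges to
`Σ_{n=0}^N aₙ (−1)ⁿ ζ(2s+n, 2+x)`, where `T_b(x) = (b+x)/(1+b+x)`. -/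
theorem transfer_operator_hurwitz (N : ℕ) (a : ℕ → ℝ) (s : ℝ) (hs : 1 / 2 < s)
    (x : ℝ) (hx : x ∈ Set.Icc (0 : ℝ) 1) :
    HasSum
      (fun b : ℕ =>
        (1 + ((b : ℝ) + 1) + x) ^ (-(2 * s)) *
          ∑ n ∈ Finset.range (N + 1),
            a n * ((((b : ℝ) + 1) + x) / (1 + ((b : ℝ) + 1) + x) - 1) ^ n)
      (∑ n ∈ Finset.range (N + 1),
        a n * (-1) ^ n * hurwitzZetaReal (2 * s + n) (2 + x)) := by
  have hx2 : 0 < 2 + x := by linarith [hx.1]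
  have hterm : ∀ b : ℕ,
      (1 + ((b : ℝ) + 1) + x) ^ (-(2 * s)) *
          ∑ n ∈ Finset.range (N + 1),
            a n * ((((b : ℝ) + 1) + x) / (1 + ((b : ℝ) + 1) + x) - 1) ^ n =
        ∑ n ∈ Finset.range (N + 1), a n * (-1) ^ n * ((b : ℝ) + (2 + x)) ^ (-(2 * s + n)) := by
    intro b
    have hy : 0 < (b : ℝ) + (2 + x) := by positivity
    rw [show 1 + ((b : ℝ) + 1) + x = b + (2 + x) by ring,
      show ((b : ℝ) + 1) + x = b + (2 + x) - 1 by ring, Finset.mul_sum]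
    refine Finset.sum_congr rfl fun n _ => ?_
    rw [mul_left_comm, rpow_neg_mul_div_sub_one_pow hy, mul_assoc]
  simp only [hterm]
  exact hasSum_sum fun n _ =>
    (hasSum_hurwitzZetaReal (by linarith [n.cast_nonneg (α := ℝ)]) hx2.le).mul_left _
end
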